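/- arXiv:1211.5122 — 6 statements merged into one kernel-verified Lean document; each statement's English description precedes it below -/
import Mathlib

section
/- The cycle C_6 on six vertices admits no edge weighting with weights from {1,2} which properly colours the vertices by sums. -/
/-!
At an edge `u(u+1)` of the cycle the two vertex sums share the weight of that edge, so they
differ exactly when the two edges flanking it have different weights. Applied at the edges
`01`, `23`, `45`, this forces the alternate edges `50`, `12`, `34` to carry pairwise distinct
weights, which two weights cannot do: the alternate edges of `C₆` form an odd cycle.
-/

open Finset

section CycleFin

variable {n : ℕ}

theorem Fin.add_one_ne_sub_one (u : Fin (n + 3)) : u + 1 ≠ u - 1 := by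
  intro h
  have two_eq_zero : (1 + 1 : Fin (n + 3)) = 0 := by
    rwa [eq_sub_iff_add_eq, add_assoc, add_eq_left] at h
  have := congrArg Fin.val two_eq_zero
  simp [Fin.val_add, Nat.mod_eq_of_lt] at this

theorem filter_cycle_adj_eq_pair (u : Fin (n + 3)) :
    univ.filter (fun x => x = u + 1 ∨ u = x + 1) = {u + 1, u - 1} := by
  ext x
  simp [eq_sub_iff_add_eq, eq_comm]

theorem sum_cycle_adj {M : Type*} [AddCommMonoid M] (w : Fin (n + 3) → Fin (n + 3) → M)
    (hw : ∀ u v, w u v = w v u) (u : Fin (n + 3)) :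
    ∑ x ∈ univ.filter (fun x => x = u + 1 ∨ u = x + 1), w u x = w u (u + 1) + w (u - 1) u := by
  rw [filter_cycle_adj_eq_pair, sum_pair (Fin.add_one_ne_sub_one u), hw u (u - 1)]

theorem ne_of_sum_cycle_adj_ne {M : Type*} [AddCommMonoid M] (w : Fin (n + 3) → Fin (n + 3) → M)
    (hw : ∀ u v, w u v = w v u) (u : Fin (n + 3))
    (hne : ∑ x ∈ univ.filter (fun x => x = u + 1 ∨ u = x + 1), w u x ≠
      ∑ x ∈ univ.filter (fun x => x = u + 1 + 1 ∨ u + 1 = x + 1), w (u + 1) x) :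
    w (u - 1) u ≠ w (u + 1) (u + 1 + 1) := by
  intro h
  rw [sum_cycle_adj w hw, sum_cycle_adj w hw, add_sub_cancel_right, h, add_comm] at hne
  exact hne rfl

end CycleFin

theorem Set.eq_or_eq_or_eq_of_mem_pair {α : Type*} {a b x y z : α} (hx : x ∈ ({a, b} : Set α))
    (hy : y ∈ ({a, b} : Set α)) (hz : z ∈ ({a, b} : Set α)) : x = y ∨ y = z ∨ x = z := by
  simp only [Set.mem_insert_iff, Set.mem_singleton_iff] at hx hy hz
  rcases hx with rfl | rfl <;> rcases hy with rfl | rfl <;> rcases hz with rfl | rfl <;> simp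

/-- The cycle `C₆` admits no edge weighting with weights from `{1,2}` which
properly colours the vertices by sums.  Vertices are `Fin 6`, with `u` adjacent
to `v` iff `v = u + 1` or `u = v + 1` (mod 6). -/
theorem c6_no_two_weighting :
    ¬ ∃ w : Fin 6 → Fin 6 → ℕ,
      (∀ u v, w u v = w v u) ∧
      (∀ u v : Fin 6, (v = u + 1 ∨ u = v + 1) → w u v ∈ ({1, 2} : Set ℕ)) ∧
      (∀ u v : Fin 6, (v = u + 1 ∨ u = v + 1) →
        (∑ x ∈ Finset.univ.filter (fun x => x = u + 1 ∨ u = x + 1), w u x) ≠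
        (∑ x ∈ Finset.univ.filter (fun x => x = v + 1 ∨ v = x + 1), w v x)) := by
  rintro ⟨w, hsym, hmem, hne⟩
  have h50_12 := ne_of_sum_cycle_adj_ne w hsym 0 (hne 0 1 (Or.inl rfl))
  have h12_34 := ne_of_sum_cycle_adj_ne w hsym 2 (hne 2 3 (Or.inl rfl))
  have h34_50 := ne_of_sum_cycle_adj_ne w hsym 4 (hne 4 5 (Or.inl rfl))
  rcases Set.eq_or_eq_or_eq_of_mem_pair (hmem 5 0 (Or.inl rfl)) (hmem 1 2 (Or.inl rfl))
    (hmem 3 4 (Or.inl rfl)) with h | h | h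
  · exact h50_12 h
  · exact h12_34 h
  · exact h34_50 h.symm
end

section
/- Every cycle C_n with n ≥ 3 admits an edge weighting with weights from {1,2,3} which properly colours the vertices by sums; that is, χ^e_Σ(C_n) ≤ 3. -/
/-!
Weight the edge `{i, i + 1}` by `f i`. The sum at a vertex `u` is then `f (u - 1) + f u`, so the
neighbours `u` and `u + 1` get different sums exactly when `f (u - 1) ≠ f (u + 1)`. It therefore
suffices to colour `ℤ/n` with `1, 2, 3` so that colours two steps apart differ, which an explicit
periodic pattern does.
-/

open Finset

section StepWeighting

variable {G : Type*} [AddCommGroup G] {a : G}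

lemma add_add_ne_self (ha : a + a ≠ 0) (u : G) : u + a + a ≠ u := by
  rwa [add_assoc, Ne, add_eq_left]

variable [DecidableEq G]

def stepWeighting (a : G) (f : G → ℕ) (u v : G) : ℕ :=
  if v = u + a then f u else if u = v + a then f v else 0

lemma stepWeighting_comm (ha : a + a ≠ 0) (f : G → ℕ) (u v : G) :
    stepWeighting a f u v = stepWeighting a f v u := by
  unfold stepWeighting
  by_cases hvu : v = u + a
  · simp [hvu, (add_add_ne_self ha u).symm]
  · by_cases huv : u = v + a
    · simp [huv, (add_add_ne_self ha v).symm]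
    · simp [hvu, huv]

lemma stepWeighting_mem (ha : a + a ≠ 0) {f : G → ℕ} {S : Set ℕ} (hf : ∀ x, f x ∈ S) {u v : G}
    (huv : v = u + a ∨ u = v + a) : stepWeighting a f u v ∈ S := by
  rcases huv with rfl | rfl
  · simpa [stepWeighting] using hf u
  · simpa [stepWeighting, (add_add_ne_self ha v).symm] using hf v

variable [Fintype G]

lemma filter_step_adj_eq (u : G) :
    univ.filter (fun x => x = u + a ∨ u = x + a) = {u + a, u - a} := by
  ext x
  simp [eq_sub_iff_add_eq, eq_comm (a := u)]

lemma sum_stepWeighting (ha : a + a ≠ 0) (f : G → ℕ) (u : G) :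
    ∑ x ∈ univ.filter (fun x => x = u + a ∨ u = x + a), stepWeighting a f u x =
      f u + f (u - a) := by
  have hne : u + a ≠ u - a := fun h =>
    add_add_ne_self ha (u - a) (by rw [sub_add_cancel, h])
  rw [filter_step_adj_eq, sum_pair hne]
  simp [stepWeighting, hne.symm]

lemma sum_stepWeighting_ne_add (ha : a + a ≠ 0) {f : G → ℕ} (hf : ∀ x, f x ≠ f (x + a + a))
    (u : G) :
    ∑ x ∈ univ.filter (fun x => x = u + a ∨ u = x + a), stepWeighting a f u x ≠
      ∑ x ∈ univ.filter (fun x => x = u + a + a ∨ u + a = x + a),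
        stepWeighting a f (u + a) x := by
  rw [sum_stepWeighting ha, sum_stepWeighting ha, add_sub_cancel_right, add_comm (f (u + a))]
  have := hf (u - a)
  rw [sub_add_cancel] at this
  omega

end StepWeighting

/-- A colouring `i ↦ c i` of `ℤ/n` with `c i ≠ c (i + 2)`: for `n = 3` the colours `1, 2, 3`, and
otherwise the pattern `1, 1, 2, 2, 1, 1, 2, 2, …` followed by `3, 3` on the last two indices. -/
def twoStepColouring (n i : ℕ) : ℕ :=
  if n = 3 then i + 1 else if n - 2 ≤ i then 3 else 1 + i / 2 % 2

lemma twoStepColouring_mem {n i : ℕ} (hi : i < n) :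
    twoStepColouring n i ∈ ({1, 2, 3} : Set ℕ) := by
  simp only [twoStepColouring, Set.mem_insert_iff, Set.mem_singleton_iff]
  split_ifs <;> omega

lemma twoStepColouring_ne_add_two {n i : ℕ} (hn : 3 ≤ n) (hi : i < n) :
    twoStepColouring n i ≠ twoStepColouring n ((i + 2) % n) := by
  obtain h | h := lt_or_ge (i + 2) n
  · rw [Nat.mod_eq_of_lt h]
    unfold twoStepColouring
    split_ifs <;> omega
  · rw [Nat.mod_eq_sub_mod h, Nat.mod_eq_of_lt (by omega)]
    unfold twoStepColouring
    split_ifs <;> omega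

lemma Fin.val_add_one_add_one {n : ℕ} [NeZero n] (i : Fin n) :
    (i + 1 + 1).val = (i.val + 2) % n := by
  simp [Fin.val_add, Nat.add_mod_mod, Nat.mod_add_mod, add_assoc]

/-- Every cycle `Cₙ` with `n ≥ 3` admits an edge weighting with weights from
`{1,2,3}` which properly colours the vertices by sums, i.e. `χ^e_Σ(Cₙ) ≤ 3`.
Vertices are `Fin n`, with `u` adjacent to `v` iff `v = u + 1` or `u = v + 1`
(mod `n`). -/
theorem cycle_sum_three_weighting (n : ℕ) [NeZero n] (hn : 3 ≤ n) :
    ∃ w : Fin n → Fin n → ℕ,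
      (∀ u v, w u v = w v u) ∧
      (∀ u v : Fin n, (v = u + 1 ∨ u = v + 1) → w u v ∈ ({1, 2, 3} : Set ℕ)) ∧
      (∀ u v : Fin n, (v = u + 1 ∨ u = v + 1) →
        (∑ x ∈ Finset.univ.filter (fun x => x = u + 1 ∨ u = x + 1), w u x) ≠
        (∑ x ∈ Finset.univ.filter (fun x => x = v + 1 ∨ v = x + 1), w v x)) := by
  have h2 : (1 : Fin n) + 1 ≠ 0 := fun h => by
    have := Fin.val_add_one_add_one (0 : Fin n)
    rw [zero_add, h, Fin.val_zero, Nat.mod_eq_of_lt (by omega)] at this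
    omega
  set f : Fin n → ℕ := fun i => twoStepColouring n i.val
  have hf : ∀ i, f i ≠ f (i + 1 + 1) := fun i => by
    simpa only [f, Fin.val_add_one_add_one] using twoStepColouring_ne_add_two hn i.isLt
  refine ⟨stepWeighting 1 f, stepWeighting_comm h2 f,
    fun u v huv => stepWeighting_mem h2 (fun i => twoStepColouring_mem i.isLt) huv, ?_⟩
  rintro u v (rfl | rfl)
  · exact sum_stepWeighting_ne_add h2 hf u
  · exact (sum_stepWeighting_ne_add h2 hf v).symm
end

section
/- If G is a d-degenerate graph, then ch^v_Σ(G) ≤ d·Δ(G) + 1, i.e., for any assignment of lists of d·Δ(G)+1 real numbers to the vertices, there is a choice of weights from the lists so that adjacent vertices receive distinct sums of weights over their neighbourhoods. -/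
/-!
Strong induction on the set `S` of weighted vertices: remove a vertex `p ∈ S` with at most `d`
neighbours in `S`, weight `S \ {p}` first, then choose `w p`. An edge `uv` is settled as soon as
every vertex of `N(u) ∆ N(v)` is weighted. If `p ∈ N(u) \ N(v)`, then `u ∈ N(v) \ N(u) ⊆ S`,
so `u` is one of the at most `d` neighbours of `p` in `S` and `v` one of the at most `Δ`
neighbours of `u`; each such pair forbids a single value of `w p`, so a list of `dΔ + 1`
values always leaves a choice.
-/

open Finset
open scoped symmDiff

lemma Finset.sum_update_of_mem_eq_add_sub {ι α : Type*} [DecidableEq ι] [AddCommGroup α]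
    {s : Finset ι} {p : ι} (h : p ∈ s) (w : ι → α) (a : α) :
    ∑ x ∈ s, Function.update w p a x = ∑ x ∈ s, w x + (a - w p) := by
  rw [sum_update_of_mem h, sum_eq_add_sum_sdiff_singleton_of_mem h]
  abel

namespace SimpleGraph

variable {V α : Type*} [Fintype V] (G : SimpleGraph V) [DecidableRel G.Adj]
  [AddCommGroup α]

section

variable [DecidableEq α]

/-- The values of `w p` that would give equal sums to an edge `uv` with `u ∈ S` adjacent to `p`
and `p ∉ N(v)`. -/
def forbiddenValues (w : V → α) (p : V) (S : Finset V) : Finset α :=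
  (S.filter (G.Adj p)).biUnion fun u => (G.neighborFinset u).image fun v =>
    ∑ x ∈ G.neighborFinset v, w x - ∑ x ∈ G.neighborFinset u, w x + w p

lemma card_forbiddenValues_le (w : V → α) (p : V) (S : Finset V) :
    #(G.forbiddenValues w p S) ≤ #(S.filter (G.Adj p)) * G.maxDegree :=
  card_biUnion_le_card_mul _ _ _ fun u _ =>
    card_image_le.trans ((card_neighborFinset_eq_degree G u).trans_le (G.degree_le_maxDegree u))

end

variable [DecidableEq V]

def IsAdditiveColouringOn (w : V → α) (S : Finset V) : Prop :=
  ∀ u v, G.Adj u v → G.neighborFinset u ∆ G.neighborFinset v ⊆ S →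
    ∑ x ∈ G.neighborFinset u, w x ≠ ∑ x ∈ G.neighborFinset v, w x

lemma left_mem_neighborFinset_symmDiff {u v : V} (huv : G.Adj u v) :
    u ∈ G.neighborFinset u ∆ G.neighborFinset v := by
  simp [mem_symmDiff, huv.symm]

lemma isAdditiveColouringOn_empty (w : V → α) : G.IsAdditiveColouringOn w ∅ :=
  fun u _ huv hsub => absurd (hsub (G.left_mem_neighborFinset_symmDiff huv)) (notMem_empty u)

variable {G} [DecidableEq α]

lemma sum_update_ne_of_mem_of_notMem {w : V → α} {p u v : V} {S : Finset V} {a : α}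
    (ha : a ∉ G.forbiddenValues w p S) (huv : G.Adj u v) (hu : u ∈ S)
    (hpu : p ∈ G.neighborFinset u) (hpv : p ∉ G.neighborFinset v) :
    ∑ x ∈ G.neighborFinset u, Function.update w p a x ≠
      ∑ x ∈ G.neighborFinset v, Function.update w p a x := by
  rw [sum_update_of_mem_eq_add_sub hpu, sum_update_of_notMem hpv]
  intro h
  refine ha (mem_biUnion.2 ⟨u, mem_filter.2 ⟨hu, G.adj_symm ((G.mem_neighborFinset u p).1 hpu)⟩,
    mem_image.2 ⟨v, (G.mem_neighborFinset u v).2 huv, ?_⟩⟩)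
  rw [← h]
  abel

lemma IsAdditiveColouringOn.update {w : V → α} {p : V} {S : Finset V} {a : α}
    (hw : G.IsAdditiveColouringOn w (S.erase p)) (ha : a ∉ G.forbiddenValues w p S) :
    G.IsAdditiveColouringOn (Function.update w p a) S := by
  intro u v huv hsub
  have hsub' (hp : p ∈ G.neighborFinset u ↔ p ∈ G.neighborFinset v) :
      G.neighborFinset u ∆ G.neighborFinset v ⊆ S.erase p := fun x hx =>
    mem_erase.2 ⟨fun hxp => by simp_all [mem_symmDiff], hsub hx⟩
  by_cases hpu : p ∈ G.neighborFinset u <;> by_cases hpv : p ∈ G.neighborFinset v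
  · rw [sum_update_of_mem_eq_add_sub hpu, sum_update_of_mem_eq_add_sub hpv]
    exact fun h => hw u v huv (hsub' (iff_of_true hpu hpv)) (add_right_cancel h)
  · exact sum_update_ne_of_mem_of_notMem ha huv
      (hsub (G.left_mem_neighborFinset_symmDiff huv)) hpu hpv
  · refine (sum_update_ne_of_mem_of_notMem ha huv.symm ?_ hpv hpu).symm
    exact hsub (symmDiff_comm (G.neighborFinset u) _ ▸ G.left_mem_neighborFinset_symmDiff huv.symm)
  · rw [sum_update_of_notMem hpu, sum_update_of_notMem hpv]
    exact hw u v huv (hsub' (iff_of_false hpu hpv))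

lemma exists_isAdditiveColouringOn_of_degenerate {d : ℕ}
    (hdeg : ∀ s : Finset V, s.Nonempty → ∃ v ∈ s, #(s.filter (G.Adj v)) ≤ d)
    {L : V → Finset α} (hL : ∀ v, d * G.maxDegree < #(L v)) (S : Finset V) :
    ∃ w : V → α, (∀ v, w v ∈ L v) ∧ G.IsAdditiveColouringOn w S := by
  induction S using Finset.strongInduction with
  | _ S ih =>
    rcases S.eq_empty_or_nonempty with rfl | hS
    · choose w hw using fun v => card_pos.1 ((Nat.zero_le _).trans_lt (hL v))
      exact ⟨w, hw, G.isAdditiveColouringOn_empty w⟩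
    obtain ⟨p, hp, hpd⟩ := hdeg S hS
    obtain ⟨w, hwL, hw⟩ := ih (S.erase p) (erase_ssubset hp)
    have hcard : #(G.forbiddenValues w p S) < #(L p) :=
      ((G.card_forbiddenValues_le w p S).trans (Nat.mul_le_mul_right _ hpd)).trans_lt (hL p)
    obtain ⟨a, haL, ha⟩ := exists_mem_notMem_of_card_lt_card hcard
    refine ⟨Function.update w p a, fun v => ?_, hw.update ha⟩
    rcases eq_or_ne v p with rfl | hvp
    · simpa using haL
    · simpa [hvp] using hwL v

end SimpleGraph

/-- If `G` is `d`-degenerate (every nonempty set of vertices contains a vertex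
with at most `d` neighbours inside the set), then `ch^v_Σ(G) ≤ d·Δ(G) + 1`:
from any assignment of lists of `d·Δ(G) + 1` real numbers to the vertices one
can choose weights so that adjacent vertices receive distinct sums of weights
over their neighbourhoods. -/
theorem degenerate_additive_choosability {V : Type*} [Fintype V] [DecidableEq V]
    (G : SimpleGraph V) [DecidableRel G.Adj] (d : ℕ)
    (hdeg : ∀ s : Finset V, s.Nonempty → ∃ v ∈ s, (s.filter (G.Adj v)).card ≤ d)
    (L : V → Finset ℝ) (hL : ∀ v, (L v).card = d * G.maxDegree + 1) :
    ∃ w : V → ℝ, (∀ v, w v ∈ L v) ∧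
      ∀ u v, G.Adj u v →
        (∑ x ∈ G.neighborFinset u, w x) ≠ (∑ x ∈ G.neighborFinset v, w x) := by
  obtain ⟨w, hwL, hw⟩ := G.exists_isAdditiveColouringOn_of_degenerate hdeg
    (L := L) (fun v => by rw [hL v]; omega) univ
  exact ⟨w, hwL, fun u v huv => hw u v huv (subset_univ _)⟩
end

section
/- For every digraph D and any assignment of lists L_a of two real numbers to each arc a, there is a choice of arc weights w(a) ∈ L_a such that for every arc (u,v), the value (sum of weights of arcs into u minus sum of weights of arcs out of u) differs from the corresponding value at v. That is, ch^e_Σ(D) ≤ 2 for digraphs. -/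
/-!
Among all weightings chosen from the lists, take one maximising the sum of squared colours
`∑ c(z)²`. If an arc `uv` had `c(u) = c(v)`, switch its weight to the other entry of its list,
changing it by `δ ≠ 0`: this lowers `c(u)` and raises `c(v)` by `δ`, leaves every other colour
unchanged, and so raises `∑ c(z)²` by `2δ(c(v) - c(u)) + 2δ² = 2δ² > 0`, a contradiction.
-/

open Finset

section
variable {V : Type*} [Fintype V] (A : V → V → Prop) [DecidableRel A]

def colour (w : V → V → ℝ) (v : V) : ℝ :=
  ∑ x ∈ univ.filter (A · v), w x v - ∑ x ∈ univ.filter (A v ·), w v x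

def colourEnergy (w : V → V → ℝ) : ℝ := ∑ z, colour A w z ^ 2

lemma colour_add (w w' : V → V → ℝ) : colour A (w + w') = colour A w + colour A w' := by
  ext z
  simp only [colour, Pi.add_apply, sum_add_distrib]
  ring

variable [DecidableEq V]

lemma colour_single {u v : V} (huv : A u v) (hne : u ≠ v) (δ : ℝ) :
    colour A (Pi.single u (Pi.single v δ)) = Pi.single v δ - Pi.single u δ := by
  ext z
  by_cases hzu : z = u <;> by_cases hzv : z = v <;>
    simp_all [colour, Pi.single_apply, ite_apply, sum_ite_eq', Ne.symm hne]

lemma sum_sq_add_single_sub_single (c : V → ℝ) {u v : V} (hne : u ≠ v) (δ : ℝ) :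
    ∑ z, (c + (Pi.single v δ - Pi.single u δ) : V → ℝ) z ^ 2 =
      ∑ z, c z ^ 2 + 2 * δ * (c v - c u) + 2 * δ ^ 2 := by
  have h : ∀ z, (c + (Pi.single v δ - Pi.single u δ) : V → ℝ) z ^ 2 = c z ^ 2 +
      ((Pi.single v (2 * δ * c v + δ ^ 2) : V → ℝ) z +
        (Pi.single u (δ ^ 2 - 2 * δ * c u) : V → ℝ) z) := by
    intro z
    by_cases hzu : z = u <;> by_cases hzv : z = v <;> simp_all <;> ring
  simp only [h, sum_add_distrib, sum_pi_single', mem_univ, if_true]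
  ring

lemma colourEnergy_add_single (w : V → V → ℝ) {u v : V} (huv : A u v)
    (hne : u ≠ v) (δ : ℝ) :
    colourEnergy A (w + Pi.single u (Pi.single v δ)) =
      colourEnergy A w + 2 * δ * (colour A w v - colour A w u) + 2 * δ ^ 2 := by
  rw [colourEnergy, colour_add, colour_single A huv hne]
  exact sum_sq_add_single_sub_single _ hne δ

/-- Weights off the arcs are pinned to `0`, so that the set of choices is finite. -/
def listChoices (L : V → V → Finset ℝ) : Finset (V → V → ℝ) :=
  Fintype.piFinset fun a => Fintype.piFinset fun b => if A a b then L a b else {0}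

lemma mem_listChoices {L : V → V → Finset ℝ} {w : V → V → ℝ} :
    w ∈ listChoices A L ↔ ∀ a b, w a b ∈ if A a b then L a b else {0} := by
  simp only [listChoices, Fintype.mem_piFinset]

lemma listChoices_nonempty {L : V → V → Finset ℝ} (hL : ∀ u v, A u v → (L u v).Nonempty) :
    (listChoices A L).Nonempty := by
  simp only [listChoices, Fintype.piFinset_nonempty]
  intro a b
  split_ifs with h
  exacts [hL a b h, singleton_nonempty 0]

lemma update_mem_listChoices {L : V → V → Finset ℝ} {w : V → V → ℝ}
    (hw : w ∈ listChoices A L) {u v : V} (huv : A u v) {y : ℝ} (hy : y ∈ L u v) :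
    w + Pi.single u (Pi.single v (y - w u v)) ∈ listChoices A L := by
  rw [mem_listChoices] at hw ⊢
  intro a b
  by_cases ha : a = u <;> by_cases hb : b = v
  · subst ha hb; simpa [huv] using hy
  all_goals simpa [Pi.single_apply, ha, hb] using hw a b

lemma colour_ne_of_isMaxOn {L : V → V → Finset ℝ}
    (hL : ∀ u v, A u v → 1 < (L u v).card) {w : V → V → ℝ} (hw : w ∈ listChoices A L)
    (hmax : IsMaxOn (colourEnergy A) (listChoices A L) w)
    {u v : V} (huv : A u v) (hne : u ≠ v) : colour A w u ≠ colour A w v := by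
  intro hc
  obtain ⟨y, hy, hyw⟩ := exists_mem_ne (hL u v huv) (w u v)
  have hδ : 0 < (y - w u v) ^ 2 := by positivity [sub_ne_zero.mpr hyw]
  have := isMaxOn_iff.mp hmax _ (update_mem_listChoices A hw huv hy)
  rw [colourEnergy_add_single A w huv hne, hc] at this
  linarith

theorem exists_colour_ne_of_one_lt_card (hirr : ∀ v, ¬ A v v) {L : V → V → Finset ℝ}
    (hL : ∀ u v, A u v → 1 < (L u v).card) :
    ∃ w : V → V → ℝ, (∀ u v, A u v → w u v ∈ L u v) ∧
      ∀ u v, A u v → colour A w u ≠ colour A w v := by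
  obtain ⟨w, hw, hmax⟩ := exists_max_image _ (colourEnergy A)
    (listChoices_nonempty A fun u v h => card_pos.mp (one_pos.trans (hL u v h)))
  refine ⟨w, fun u v h => by simpa [h] using (mem_listChoices A).mp hw u v, fun u v h => ?_⟩
  exact colour_ne_of_isMaxOn A hL hw (isMaxOn_iff.mpr hmax) h fun huv => hirr v (huv ▸ h)

end

/-- For every loopless digraph `D` (given by an irreflexive arc relation `A`)
and every assignment of lists of two real numbers to the arcs, there is a choice
of arc weights from the lists such that for every arc `(u,v)` the value
`(sum of weights of incoming arcs) − (sum of weights of outgoing arcs)` at `u`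
differs from the corresponding value at `v`: `ch^e_Σ(D) ≤ 2` for digraphs. -/
theorem digraph_list_two_weighting {V : Type*} [Fintype V] [DecidableEq V]
    (A : V → V → Prop) [DecidableRel A] (hirr : ∀ v, ¬ A v v)
    (L : V → V → Finset ℝ) (hL : ∀ u v, A u v → (L u v).card = 2) :
    ∃ w : V → V → ℝ, (∀ u v, A u v → w u v ∈ L u v) ∧
      ∀ u v, A u v →
        ((∑ x ∈ Finset.univ.filter (fun x => A x u), w x u) -
          (∑ x ∈ Finset.univ.filter (fun x => A u x), w u x)) ≠
        ((∑ x ∈ Finset.univ.filter (fun x => A x v), w x v) -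
          (∑ x ∈ Finset.univ.filter (fun x => A v x), w v x)) :=
  exists_colour_ne_of_one_lt_card A hirr fun u v h => by simp [hL u v h]
end

section
/- For every graph G, the edge-version multiset irregularity parameter of the line graph is bounded by the chromatic index: χ'^e_m(G) ≤ χ'(G), i.e., there exists an edge weighting w: E(G) → {1,...,χ'(G)} such that for every pair of adjacent edges e, f, the multiset of weights of edges adjacent to e differs from the multiset of weights of edges adjacent to f. -/
/-!
Take the proper colouring itself as the weighting. If `e` and `f` are adjacent, the colour of `e`
occurs among the weights of the edges adjacent to `f`, but not among those of the edges adjacent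
to `e`, since properness forbids it there.
-/

theorem Multiset.map_filter_val_ne_of_proper {α β : Type*} (s : Finset α) (R : α → α → Prop)
    [DecidableRel R] (c : α → β) (hproper : ∀ a ∈ s, ∀ g ∈ s, R a g → c a ≠ c g)
    {a b : α} (ha : a ∈ s) (hba : R b a) :
    (s.filter (R a)).val.map c ≠ (s.filter (R b)).val.map c := by
  intro hEq
  have hb : c a ∈ (s.filter (R b)).val.map c :=
    Multiset.mem_map_of_mem c (Finset.mem_filter.mpr ⟨ha, hba⟩)
  obtain ⟨g, hg, hcg⟩ := Multiset.mem_map.mp (hEq ▸ hb)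
  obtain ⟨hgs, hag⟩ := Finset.mem_filter.mp hg
  exact hproper a ha g hgs hag hcg.symm

/-- `χ'^e_m(G) ≤ χ'(G)`: whenever `G` has a proper edge colouring with colours
in `{1,…,m}`, there is an edge weighting with weights in `{1,…,m}` such that
any two adjacent edges receive distinct multisets of weights of their adjacent
edges.  (Two distinct edges are adjacent if they share an endpoint.) -/
theorem edge_multiset_bound_by_chromatic_index {V : Type*} [Fintype V] [DecidableEq V]
    (G : SimpleGraph V) [DecidableRel G.Adj] (m : ℕ)
    (c : Sym2 V → ℕ)
    (hmem : ∀ e ∈ G.edgeFinset, c e ∈ Finset.Icc 1 m)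
    (hproper : ∀ e ∈ G.edgeFinset, ∀ f ∈ G.edgeFinset,
      e ≠ f → (∃ v, v ∈ e ∧ v ∈ f) → c e ≠ c f) :
    ∃ w : Sym2 V → ℕ,
      (∀ e ∈ G.edgeFinset, w e ∈ Finset.Icc 1 m) ∧
      (∀ e ∈ G.edgeFinset, ∀ f ∈ G.edgeFinset, e ≠ f → (∃ v, v ∈ e ∧ v ∈ f) →
        Multiset.map w ((G.edgeFinset.filter (fun g => g ≠ e ∧ ∃ v, v ∈ e ∧ v ∈ g)).val) ≠
        Multiset.map w ((G.edgeFinset.filter (fun g => g ≠ f ∧ ∃ v, v ∈ f ∧ v ∈ g)).val)) := by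
  refine ⟨c, hmem, fun e he f _ hne ⟨v, hve, hvf⟩ => ?_⟩
  exact Multiset.map_filter_val_ne_of_proper G.edgeFinset
    (fun x g => g ≠ x ∧ ∃ v, v ∈ x ∧ v ∈ g) c
    (fun a ha g hg ⟨hga, hadj⟩ => hproper a ha g hg (Ne.symm hga) hadj) he ⟨hne, v, hvf, hve⟩
end

section
/- Let a be a positive real. For the path P on 4k+2 vertices (k ≥ 1), assigning the list {0, a} to every edge, there is no choice of edge weights from the lists which properly colours the vertices by sums. Consequently ch^e_Σ(P) > 2 is witnessed for the path on 6 vertices with lists {0,a}. -/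
/-! Pad the edge weights of the path with zeros at both ends: `e 0 = 0`, `e i = w (i - 1) i`,
`e n = 0`, so that the sum at vertex `u` is `e u + e (u + 1)`. Properness at the edge `{u, u + 1}`
then says `e u ≠ e (u + 2)`, so the even-indexed weights `e 0, e 2, …, e (4k + 2)` alternate
between the two values `0` and `a`. There is an even number `2k + 2` of them, so the first and the
last differ, yet both are padding zeros. -/

open Finset

section Alternating

variable {α : Type*} {f : ℕ → α} {b c : α} {m : ℕ}

theorem eq_of_ne_of_ne_of_mem_pair {x y z : α} (hx : x ∈ ({b, c} : Set α))
    (hy : y ∈ ({b, c} : Set α)) (hz : z ∈ ({b, c} : Set α)) (hxy : x ≠ y) (hyz : y ≠ z) :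
    x = z := by
  simp only [Set.mem_insert_iff, Set.mem_singleton_iff] at hx hy hz
  grind

theorem apply_two_mul_eq_of_alternating (hf : ∀ i, i ≤ m → f i ∈ ({b, c} : Set α))
    (halt : ∀ i < m, f i ≠ f (i + 1)) (j : ℕ) (hj : 2 * j ≤ m) : f (2 * j) = f 0 := by
  induction j with
  | zero => rfl
  | succ j ih =>
    rw [← ih (by omega), Nat.mul_succ]
    exact (eq_of_ne_of_ne_of_mem_pair (hf (2 * j) (by omega)) (hf (2 * j + 1) (by omega))
      (hf (2 * j + 2) (by omega)) (halt (2 * j) (by omega)) (halt (2 * j + 1) (by omega))).symm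

theorem apply_odd_ne_of_alternating (hf : ∀ i, i ≤ 2 * m + 1 → f i ∈ ({b, c} : Set α))
    (halt : ∀ i < 2 * m + 1, f i ≠ f (i + 1)) : f (2 * m + 1) ≠ f 0 := by
  rw [← apply_two_mul_eq_of_alternating hf halt m (by omega)]
  exact (halt (2 * m) (by omega)).symm

end Alternating

section PathWeighting

variable {M : Type*} [AddCommMonoid M] {n : ℕ} {w : Fin n → Fin n → M}

def pathVertexSum (w : Fin n → Fin n → M) (u : Fin n) : M :=
  ∑ x ∈ univ.filter (fun x : Fin n => u.val + 1 = x.val ∨ x.val + 1 = u.val), w u x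

def pathEdgeWeight (w : Fin n → Fin n → M) (i : ℕ) : M :=
  if h : 0 < i ∧ i < n then w ⟨i - 1, by omega⟩ ⟨i, h.2⟩ else 0

theorem pathEdgeWeight_eq_zero {i : ℕ} (hi : i = 0 ∨ n ≤ i) : pathEdgeWeight w i = 0 :=
  dif_neg (by omega)

theorem sum_filter_val_eq_dite (g : Fin n → M) (m : ℕ) :
    ∑ x ∈ univ.filter (fun x : Fin n => x.val = m), g x = if h : m < n then g ⟨m, h⟩ else 0 := by
  split_ifs with h
  · rw [sum_eq_single_of_mem ⟨m, h⟩ (by simp)]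
    intro x hx hne
    exact absurd (Fin.ext (by simpa using hx)) hne
  · exact sum_eq_zero fun x hx => absurd (by simpa using hx) (by omega)

theorem pathVertexSum_eq (hw : ∀ u v, w u v = w v u) (u : Fin n) :
    pathVertexSum w u = pathEdgeWeight w u + pathEdgeWeight w (u + 1) := by
  rw [pathVertexSum, filter_or, sum_union (disjoint_filter.2 fun x _ h => by omega), add_comm]
  congr 1
  · obtain ⟨_ | u, hu⟩ := u
    · simp [pathEdgeWeight]
    · simp only [Nat.add_right_cancel_iff, sum_filter_val_eq_dite, pathEdgeWeight]
      rw [dif_pos (by omega), dif_pos (by omega), hw]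
      rfl
  · simp only [eq_comm (a := u.val + 1), sum_filter_val_eq_dite, pathEdgeWeight]
    split_ifs <;> first | rfl | omega

theorem pathEdgeWeight_ne_of_pathVertexSum_ne (hw : ∀ u v, w u v = w v u) {i : ℕ}
    (hi : i + 1 < n) (hne : pathVertexSum w ⟨i, by omega⟩ ≠ pathVertexSum w ⟨i + 1, hi⟩) :
    pathEdgeWeight w i ≠ pathEdgeWeight w (i + 2) := by
  intro h
  apply hne
  rw [pathVertexSum_eq hw, pathVertexSum_eq hw]
  dsimp only
  rw [h, add_comm]

theorem pathEdgeWeight_mem {s : Set M} (h0 : 0 ∈ s)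
    (hw : ∀ u v : Fin n, (u.val + 1 = v.val ∨ v.val + 1 = u.val) → w u v ∈ s) (i : ℕ) :
    pathEdgeWeight w i ∈ s := by
  unfold pathEdgeWeight
  split_ifs with h
  · exact hw _ _ (Or.inl (by dsimp only; omega))
  · exact h0

end PathWeighting

theorem path_list_zero_a_no_weighting_general (a : ℝ) (k : ℕ) :
    ¬ ∃ w : Fin (4 * k + 2) → Fin (4 * k + 2) → ℝ,
      (∀ u v, w u v = w v u) ∧
      (∀ u v : Fin (4 * k + 2), (u.val + 1 = v.val ∨ v.val + 1 = u.val) →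
        w u v ∈ ({0, a} : Set ℝ)) ∧
      (∀ u v : Fin (4 * k + 2), (u.val + 1 = v.val ∨ v.val + 1 = u.val) →
        (∑ x ∈ Finset.univ.filter
            (fun x : Fin (4 * k + 2) => u.val + 1 = x.val ∨ x.val + 1 = u.val), w u x) ≠
        (∑ x ∈ Finset.univ.filter
            (fun x : Fin (4 * k + 2) => v.val + 1 = x.val ∨ x.val + 1 = v.val), w v x)) := by
  rintro ⟨w, hsym, hlist, hproper⟩
  have hmem : ∀ i, pathEdgeWeight w i ∈ ({0, a} : Set ℝ) := pathEdgeWeight_mem (by simp) hlist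
  refine apply_odd_ne_of_alternating (f := fun j => pathEdgeWeight w (2 * j)) (m := k)
    (fun j _ => hmem (2 * j)) (fun j hj => ?_) ?_
  · exact pathEdgeWeight_ne_of_pathVertexSum_ne hsym (by omega) (hproper _ _ (Or.inl rfl))
  · show pathEdgeWeight w (2 * (2 * k + 1)) = pathEdgeWeight w (2 * 0)
    rw [pathEdgeWeight_eq_zero (.inr (by omega)), pathEdgeWeight_eq_zero (.inl rfl)]

/-- Let `a > 0` and `k ≥ 1`.  For the path on `4k + 2` vertices, if every edge
is assigned the list `{0, a}`, there is no choice of edge weights from the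
lists which properly colours the vertices by sums.  (The case `k = 1` is the
path on 6 vertices, witnessing `ch^e_Σ(P₆) > 2`.) -/
theorem path_list_zero_a_no_weighting (a : ℝ) (ha : 0 < a) (k : ℕ) (hk : 1 ≤ k) :
    ¬ ∃ w : Fin (4 * k + 2) → Fin (4 * k + 2) → ℝ,
      (∀ u v, w u v = w v u) ∧
      (∀ u v : Fin (4 * k + 2), (u.val + 1 = v.val ∨ v.val + 1 = u.val) →
        w u v ∈ ({0, a} : Set ℝ)) ∧
      (∀ u v : Fin (4 * k + 2), (u.val + 1 = v.val ∨ v.val + 1 = u.val) →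
        (∑ x ∈ Finset.univ.filter
            (fun x : Fin (4 * k + 2) => u.val + 1 = x.val ∨ x.val + 1 = u.val), w u x) ≠
        (∑ x ∈ Finset.univ.filter
            (fun x : Fin (4 * k + 2) => v.val + 1 = x.val ∨ x.val + 1 = v.val), w v x)) :=
  path_list_zero_a_no_weighting_general a k
end
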